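/- arXiv:2310.18925 — 6 statements merged into one kernel-verified Lean document; each statement's English description precedes it below -/
import Mathlib

section
/- Let V ⊆ ℝ^E be a linear subspace. Define a flat of V to be a subset F ⊆ E such that there exists v ∈ V whose set of zero coordinates is exactly F. Then the intersection of two flats of V is a flat of V. -/
/-- the intersection of two flats of a linear subspace is a flat. -/
theorem flat_inter {E : Type*} [Fintype E] (V : Submodule ℝ (E → ℝ)) (F G : Set E)
    (hF : ∃ v ∈ V, ∀ i, v i = 0 ↔ i ∈ F) (hG : ∃ v ∈ V, ∀ i, v i = 0 ↔ i ∈ G) :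
    ∃ v ∈ V, ∀ i, v i = 0 ↔ i ∈ F ∩ G := by
  obtain ⟨v, hv, hvF⟩ := hF
  obtain ⟨w, hw, hwG⟩ := hG
  obtain ⟨c, hc⟩ := Infinite.exists_notMem_finset
    (Finset.image (fun i => -(v i) / (w i)) Finset.univ)
  refine ⟨v + c • w, V.add_mem hv (V.smul_mem c hw), fun i => ?_⟩
  have key : v i + c * w i = 0 ↔ (v i = 0 ∧ w i = 0) := by
    constructor
    · intro h
      by_cases hwi : w i = 0
      · constructor
        · simpa [hwi] using h
        · exact hwi
      · exfalso
        apply hc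
        rw [Finset.mem_image]
        refine ⟨i, Finset.mem_univ i, ?_⟩
        field_simp
        linarith
    · rintro ⟨h1, h2⟩
      simp [h1, h2]
  simp only [Pi.add_apply, Pi.smul_apply, smul_eq_mul]
  rw [key, Set.mem_inter_iff, ← hvF i, ← hwG i]
end

section
/- Let V ⊆ ℝ^E be a linear subspace and F ⊆ E an acyclic flat of V. Then a subset G ⊆ F is an acyclic flat of V if and only if G is an acyclic flat of the projection π_F(V) ⊆ ℝ^F. -/
/-- A subset `F` is an acyclic flat of a set `W` of vectors if some `w ∈ W`
vanishes on `F` and is strictly positive off `F`. -/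
def IsAcyclicFlat {S : Type*} (W : Set (S → ℝ)) (F : Set S) : Prop :=
  ∃ w ∈ W, (∀ i ∈ F, w i = 0) ∧ ∀ i ∉ F, 0 < w i

/-- for `F` an acyclic flat and `G ⊆ F`, `G` is an acyclic flat of `V`
iff `G` is an acyclic flat of the projection `π_F(V) ⊆ ℝ^F`. -/
theorem acyclicFlat_restriction {E : Type*} [Fintype E] (V : Submodule ℝ (E → ℝ))
    (F G : Set E) (hF : IsAcyclicFlat (V : Set (E → ℝ)) F) (hG : G ⊆ F) :
    IsAcyclicFlat (V : Set (E → ℝ)) G ↔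
      IsAcyclicFlat ((fun v : E → ℝ => fun i : F => v i) '' (V : Set (E → ℝ)))
        {i : F | (i : E) ∈ G} := by
  classical
  obtain ⟨w, hwV, hw0, hwpos⟩ := hF
  constructor
  · rintro ⟨u, huV, hu0, hupos⟩
    refine ⟨fun i : F => u i, ⟨u, huV, rfl⟩, ?_, ?_⟩
    · intro i hi; exact hu0 i hi
    · intro i hi; exact hupos i hi
  · rintro ⟨_, ⟨v, hvV, rfl⟩, hv0, hvpos⟩
    -- choose t large so that v + t • w is positive off F
    set f : E → ℝ := fun i => (1 - v i) / w i with hf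
    set t : ℝ := 1 + ∑ i, |f i| with ht
    have htge : ∀ i : E, f i ≤ t := by
      intro i
      have h1 : |f i| ≤ ∑ j, |f j| :=
        Finset.single_le_sum (fun j _ => abs_nonneg (f j)) (Finset.mem_univ i)
      calc f i ≤ |f i| := le_abs_self _
        _ ≤ 1 + ∑ j, |f j| := by linarith
    refine ⟨v + t • w, V.add_mem hvV (V.smul_mem t hwV), ?_, ?_⟩
    · intro i hi
      have h1 : v i = 0 := hv0 ⟨i, hG hi⟩ hi
      have h2 : w i = 0 := hw0 i (hG hi)
      simp [h1, h2]
    · intro i hi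
      by_cases hiF : i ∈ F
      · have h1 : 0 < v i := hvpos ⟨i, hiF⟩ hi
        have h2 : w i = 0 := hw0 i hiF
        simpa [h2] using h1
      · have hw : 0 < w i := hwpos i hiF
        have h1 : f i * w i = 1 - v i := div_mul_cancel₀ _ (ne_of_gt hw)
        have h2 : f i * w i ≤ t * w i :=
          mul_le_mul_of_nonneg_right (htge i) hw.le
        have : (1 : ℝ) - v i ≤ t * w i := h1 ▸ h2
        simp only [Pi.add_apply, Pi.smul_apply, smul_eq_mul]
        linarith
end

section
/- Let V ⊆ ℝ^E be a linear subspace and F ⊆ E. Then V ∩ (0^F × ℝ_{>0}^{E\F}) is nonempty if and only if there is no linear functional f(x) = Σ_i α_i x_i vanishing on V with α_i ≥ 0 for all i ∈ E\F and α_i > 0 for at least one i ∈ E\F. -/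
open Finset

/-- Representation of a continuous linear functional on `E → ℝ` by coordinates. -/
lemma clm_repr_aux {E : Type*} [Fintype E] [DecidableEq E] (f : (E → ℝ) →L[ℝ] ℝ) (x : E → ℝ) :
    f x = ∑ i, x i * f (Pi.single i 1) := by
  have hx : ∑ i, x i • (Pi.single i 1 : E → ℝ) = x := by
    ext j
    simp [Pi.single_apply, mul_ite]
  calc f x = f (∑ i, x i • (Pi.single i 1 : E → ℝ)) := by rw [hx]
    _ = ∑ i, x i * f (Pi.single i 1) := by
        rw [map_sum]
        exact Finset.sum_congr rfl fun i _ => by rw [map_smul, smul_eq_mul]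

/-- A continuous linear functional bounded above on a submodule vanishes on it. -/
lemma vanish_of_bddAbove_aux {E : Type*} [Fintype E] (f : (E → ℝ) →L[ℝ] ℝ)
    (B : Submodule ℝ (E → ℝ)) (s : ℝ) (h : ∀ x ∈ (B : Set (E → ℝ)), f x < s) :
    ∀ x ∈ B, f x = 0 := by
  intro x hx
  by_contra hfx
  have h1 := h ((s / f x) • x) (B.smul_mem _ hx)
  rw [map_smul, smul_eq_mul, div_mul_cancel₀ _ hfx] at h1
  exact lt_irrefl _ h1

/-- Biduality: a vector orthogonal to every functional vanishing on `V` lies in `V`. -/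
lemma mem_of_forall_dot_aux {E : Type*} [Fintype E] (V : Submodule ℝ (E → ℝ)) (v : E → ℝ)
    (h : ∀ α : E → ℝ, (∀ w ∈ V, ∑ i, α i * w i = 0) → ∑ i, α i * v i = 0) : v ∈ V := by
  classical
  by_contra hv
  obtain ⟨g, s, t, hB, hst, hΔ⟩ := geometric_hahn_banach_closed_compact V.convex
    V.closed_of_finiteDimensional (convex_singleton v) isCompact_singleton
    (Set.disjoint_singleton_right.mpr hv)
  have hg0 : ∀ x ∈ V, g x = 0 := vanish_of_bddAbove_aux g V s hB
  set α : E → ℝ := fun i => g (Pi.single i 1) with hα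
  have hrepr : ∀ x : E → ℝ, g x = ∑ i, α i * x i := by
    intro x
    rw [clm_repr_aux g x]
    exact Finset.sum_congr rfl fun i _ => mul_comm _ _
  have h1 : ∑ i, α i * v i = 0 := h α (fun w hw => by rw [← hrepr w]; exact hg0 w hw)
  have h2 : t < g v := hΔ v (Set.mem_singleton v)
  have h3 : g 0 < s := hB 0 V.zero_mem
  rw [map_zero] at h3
  rw [hrepr v, h1] at h2
  linarith

/-- The annihilator of `V` under the standard dot product. -/
def dotAnnihilator {E : Type*} [Fintype E] (V : Submodule ℝ (E → ℝ)) :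
    Submodule ℝ (E → ℝ) where
  carrier := {α | ∀ w ∈ V, ∑ i, α i * w i = 0}
  add_mem' := by
    intro a b ha hb w hw
    simp only [Set.mem_setOf_eq, Pi.add_apply, add_mul, Finset.sum_add_distrib] at *
    rw [ha w hw, hb w hw, add_zero]
  zero_mem' := by intro w hw; simp
  smul_mem' := by
    intro c a ha w hw
    simp only [Set.mem_setOf_eq, Pi.smul_apply, smul_eq_mul, mul_assoc, ← Finset.mul_sum] at *
    rw [ha w hw, mul_zero]

lemma mem_dotAnnihilator {E : Type*} [Fintype E] (V : Submodule ℝ (E → ℝ)) (α : E → ℝ) :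
    α ∈ dotAnnihilator V ↔ ∀ w ∈ V, ∑ i, α i * w i = 0 := Iff.rfl

/-- Zeroing out coordinates in `F`, as a linear map. -/
def projOff {E : Type*} (F : Set E) [DecidablePred (· ∈ F)] :
    (E → ℝ) →ₗ[ℝ] (E → ℝ) where
  toFun x i := if i ∈ F then 0 else x i
  map_add' := by intro x y; funext i; by_cases h : i ∈ F <;> simp [h]
  map_smul' := by intro c x; funext i; by_cases h : i ∈ F <;> simp [h]

lemma projOff_apply {E : Type*} (F : Set E) [DecidablePred (· ∈ F)] (x : E → ℝ) (i : E) :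
    projOff F x i = if i ∈ F then 0 else x i := rfl

/-- `V ∩ (0^F × ℝ_{>0}^{E∖F})` is nonempty iff no linear functional
vanishing on `V` is nonnegative on `E∖F` and strictly positive somewhere on `E∖F`. -/
theorem acyclicFlat_iff_no_functional {E : Type*} [Fintype E] (V : Submodule ℝ (E → ℝ))
    (F : Set E) :
    (∃ v ∈ V, (∀ i ∈ F, v i = 0) ∧ ∀ i ∉ F, 0 < v i) ↔
      ¬ ∃ α : E → ℝ, (∀ v ∈ V, ∑ i, α i * v i = 0) ∧ (∀ i ∉ F, 0 ≤ α i) ∧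
        ∃ i, i ∉ F ∧ 0 < α i := by
  constructor
  · rintro ⟨v, hvV, hv0, hvpos⟩ ⟨α, hαV, hα0, j, hjF, hjpos⟩
    have hzero := hαV v hvV
    have hpos : 0 < ∑ i, α i * v i := by
      apply Finset.sum_pos'
      · intro i _
        by_cases hi : i ∈ F
        · simp [hv0 i hi]
        · exact mul_nonneg (hα0 i hi) (hvpos i hi).le
      · exact ⟨j, Finset.mem_univ j, mul_pos hjpos (hvpos j hjF)⟩
    linarith
  · intro hno
    classical
    by_cases hF : ∀ i, i ∈ F
    · exact ⟨0, V.zero_mem, fun i _ => rfl, fun i hi => absurd (hF i) hi⟩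
    set A : Submodule ℝ (E → ℝ) := dotAnnihilator V with hAdef
    set B : Submodule ℝ (E → ℝ) := Submodule.comap (projOff F) (Submodule.map (projOff F) A)
      with hBdef
    set Δ : Set (E → ℝ) := {x | x ∈ stdSimplex ℝ E ∧ ∀ i ∈ F, x i = 0} with hΔdef
    -- Δ is convex and compact
    have hΔconv : Convex ℝ Δ := by
      intro x hx y hy a b ha hb hab
      refine ⟨convex_stdSimplex ℝ E hx.1 hy.1 ha hb hab, fun i hi => ?_⟩
      simp [hx.2 i hi, hy.2 i hi]
    have hZ : IsClosed {x : E → ℝ | ∀ i ∈ F, x i = 0} := by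
      have : {x : E → ℝ | ∀ i ∈ F, x i = 0} = ⋂ i ∈ F, {x : E → ℝ | x i = 0} := by
        ext x; simp
      rw [this]
      exact isClosed_biInter fun i _ => isClosed_eq (continuous_apply i) continuous_const
    have hΔcpt : IsCompact Δ := (isCompact_stdSimplex ℝ E).inter_right hZ
    -- B and Δ are disjoint
    have hdisj : Disjoint (B : Set (E → ℝ)) Δ := by
      rw [Set.disjoint_left]
      rintro x hxB ⟨⟨hnn, hsum⟩, hxF⟩
      obtain ⟨α, hαA, hαx⟩ := hxB
      have hagree : ∀ i ∉ F, α i = x i := by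
        intro i hi
        have := congrFun hαx i
        simpa [projOff_apply, hi] using this
      obtain ⟨j, _, hj⟩ := Finset.exists_ne_zero_of_sum_ne_zero (by rw [hsum]; norm_num :
        ∑ i, x i ≠ 0)
      have hjF : j ∉ F := fun h => hj (hxF j h)
      exact hno ⟨α, hαA, fun i hi => (hagree i hi).symm ▸ hnn i,
        j, hjF, (hagree j hjF).symm ▸ lt_of_le_of_ne (hnn j) (Ne.symm hj)⟩
    -- separate
    obtain ⟨f, s, t, hfB, hst, hfΔ⟩ := geometric_hahn_banach_closed_compact B.convex
      B.closed_of_finiteDimensional hΔconv hΔcpt hdisj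
    have hf0 : ∀ x ∈ B, f x = 0 := vanish_of_bddAbove_aux f B s hfB
    have hs0 : 0 < s := by
      have := hfB 0 B.zero_mem
      rwa [map_zero] at this
    refine ⟨fun i => f (Pi.single i 1), ?_, ?_, ?_⟩
    · apply mem_of_forall_dot_aux
      intro α hα
      have hαB : α ∈ B := Submodule.mem_comap.mpr ⟨α, hα, rfl⟩
      rw [← clm_repr_aux f α]
      exact hf0 α hαB
    · intro i hi
      have hmem : Pi.single i 1 ∈ B := by
        refine Submodule.mem_comap.mpr ⟨0, A.zero_mem, ?_⟩
        rw [map_zero]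
        funext j
        by_cases hj : j ∈ F
        · simp [projOff_apply, hj]
        · have : j ≠ i := fun h => hj (h ▸ hi)
          simp [projOff_apply, hj, Pi.single_eq_of_ne this]
      exact hf0 _ hmem
    · intro i hi
      have hmem : Pi.single i 1 ∈ Δ := by
        refine ⟨single_mem_stdSimplex ℝ i, fun j hj => ?_⟩
        have : j ≠ i := fun h => hi (h ▸ hj)
        exact Pi.single_eq_of_ne this 1
      have := hfΔ _ hmem
      linarith
end

section
/- Let V ⊆ ℝ^E be a linear subspace and F, G ⊆ E with V ∩ (0^F × ℝ_{>0}^{E\F}) and V ∩ (0^G × ℝ_{>0}^{E\G}) both nonempty (F and G are acyclic flats). Then F ∩ G is also an acyclic flat: V ∩ (0^{F∩G} × ℝ_{>0}^{E\(F∩G)}) is nonempty. -/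
/-- the intersection of two acyclic flats is an acyclic flat. -/
theorem acyclicFlat_inter {E : Type*} [Fintype E] (V : Submodule ℝ (E → ℝ)) (F G : Set E)
    (hF : ∃ v ∈ V, (∀ i ∈ F, v i = 0) ∧ ∀ i ∉ F, 0 < v i)
    (hG : ∃ v ∈ V, (∀ i ∈ G, v i = 0) ∧ ∀ i ∉ G, 0 < v i) :
    ∃ v ∈ V, (∀ i ∈ F ∩ G, v i = 0) ∧ ∀ i ∉ F ∩ G, 0 < v i := by
  obtain ⟨v, hvV, hv0, hvp⟩ := hF
  obtain ⟨w, hwV, hw0, hwp⟩ := hG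
  have hvnn : ∀ i, 0 ≤ v i := fun i => by
    by_cases h : i ∈ F
    · exact le_of_eq (hv0 i h).symm
    · exact (hvp i h).le
  have hwnn : ∀ i, 0 ≤ w i := fun i => by
    by_cases h : i ∈ G
    · exact le_of_eq (hw0 i h).symm
    · exact (hwp i h).le
  refine ⟨v + w, V.add_mem hvV hwV, fun i hi => by
    simp [hv0 i hi.1, hw0 i hi.2], fun i hi => ?_⟩
  rcases (not_and_or.mp (by simpa [Set.mem_inter_iff] using hi)) with h | h
  · exact add_pos_of_pos_of_nonneg (hvp i h) (hwnn i)
  · exact add_pos_of_nonneg_of_pos (hvnn i) (hwp i h)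
end

section
/- Let V ⊆ ℝ^E be a linear subspace with V ∩ ℝ_{>0}^E ≠ ∅. The acyclic flats of V, ordered by inclusion, are exactly the zero sets of faces of the polyhedral cone C = V ∩ ℝ_{≥0}^E: a subset F ⊆ E is an acyclic flat if and only if {x ∈ C : x_i = 0 for all i ∈ F} is a face of C equal to the set of x ∈ C vanishing on F, and the map F ↦ {x ∈ C : x|_F = 0} is an order-reversing bijection from acyclic flats to nonempty faces of C. -/
/-- A face of `C` is the intersection of `C` with the zero set of a linear
functional which is nonnegative on `C`. -/
def IsFace {E : Type*} [Fintype E] (C Φ : Set (E → ℝ)) : Prop :=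
  ∃ α : E → ℝ, (∀ x ∈ C, 0 ≤ ∑ i, α i * x i) ∧ Φ = {x ∈ C | ∑ i, α i * x i = 0}

/-- `F ↦ {x ∈ C : x|_F = 0}` is an order-reversing bijection from
acyclic flats of `V` to nonempty faces of the cone `C = V ∩ ℝ_{≥0}^E`. -/
theorem acyclicFlats_faces_bijection {E : Type*} [Fintype E] (V : Submodule ℝ (E → ℝ))
    (hV : ∃ v ∈ V, ∀ i, 0 < v i)
    (C : Set (E → ℝ)) (hC : C = {x : E → ℝ | x ∈ V ∧ ∀ i, 0 ≤ x i})
    (Φ : Set E → Set (E → ℝ)) (hΦ : ∀ F, Φ F = {x ∈ C | ∀ i ∈ F, x i = 0}) :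
    (∀ F, IsAcyclicFlat (V : Set (E → ℝ)) F → IsFace C (Φ F) ∧ (Φ F).Nonempty) ∧
    (∀ F G, IsAcyclicFlat (V : Set (E → ℝ)) F → IsAcyclicFlat (V : Set (E → ℝ)) G →
      (F ⊆ G ↔ Φ G ⊆ Φ F)) ∧
    (∀ F G, IsAcyclicFlat (V : Set (E → ℝ)) F → IsAcyclicFlat (V : Set (E → ℝ)) G →
      Φ F = Φ G → F = G) ∧
    (∀ Ψ, IsFace C Ψ → Ψ.Nonempty → ∃ F, IsAcyclicFlat (V : Set (E → ℝ)) F ∧ Φ F = Ψ) := by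
  classical
  -- a witness of an acyclic flat lies in Φ F
  have key : ∀ F w, w ∈ V → (∀ i ∈ F, w i = 0) → (∀ i ∉ F, 0 < w i) → w ∈ Φ F := by
    intro F w hwV hw0 hwp
    rw [hΦ]
    refine ⟨?_, hw0⟩
    rw [hC]
    refine ⟨hwV, fun i => ?_⟩
    by_cases hi : i ∈ F
    · rw [hw0 i hi]
    · exact (hwp i hi).le
  have mem_Phi : ∀ F x, x ∈ Φ F ↔ x ∈ C ∧ ∀ i ∈ F, x i = 0 := by
    intro F x; rw [hΦ]; rfl
  have rev : ∀ F G, IsAcyclicFlat (V : Set (E → ℝ)) G → Φ G ⊆ Φ F → F ⊆ G := by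
    rintro F G ⟨wG, hwGV, hwG0, hwGp⟩ h i hi
    have hwG : wG ∈ Φ F := h (key G wG hwGV hwG0 hwGp)
    rw [mem_Phi] at hwG
    by_contra hiG
    exact absurd (hwG.2 i hi) (hwGp i hiG).ne'
  refine ⟨?_, ?_, ?_, ?_⟩
  · -- faces
    rintro F ⟨w, hwV, hw0, hwp⟩
    constructor
    · refine ⟨fun i => if i ∈ F then 1 else 0, ?_, ?_⟩
      · intro x hx
        rw [hC] at hx
        refine Finset.sum_nonneg fun i _ => ?_
        by_cases h : i ∈ F <;> simp [h, hx.2 i]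
      · ext x
        rw [mem_Phi]
        constructor
        · rintro ⟨hxC, hx0⟩
          refine ⟨hxC, Finset.sum_eq_zero fun i _ => ?_⟩
          by_cases h : i ∈ F <;> simp [h, fun hh => hx0 i hh]
        · rintro ⟨hxC, hsum⟩
          refine ⟨hxC, fun i hi => ?_⟩
          have hxnn : ∀ j, 0 ≤ x j := by rw [hC] at hxC; exact hxC.2
          have := (Finset.sum_eq_zero_iff_of_nonneg (fun j _ => ?_)).mp hsum i (Finset.mem_univ i)
          · simpa [hi] using this
          · by_cases h : j ∈ F <;> simp [h, hxnn j]
    · exact ⟨w, key F w hwV hw0 hwp⟩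
  · -- order reversing
    rintro F G hF hG
    constructor
    · intro hFG x hx
      rw [mem_Phi] at hx ⊢
      exact ⟨hx.1, fun i hi => hx.2 i (hFG hi)⟩
    · exact rev F G hG
  · -- injective
    rintro F G hF hG hFG
    exact le_antisymm (rev F G hG hFG.ge) (rev G F hF hFG.le)
  · -- surjective
    rintro Ψ ⟨α, hα, hΨ⟩ ⟨x0, hx0⟩
    set F : Set E := {i | ∀ x ∈ Ψ, x i = 0} with hF
    have hΨC : Ψ ⊆ C := by rw [hΨ]; exact fun x hx => hx.1
    have hΨnn : ∀ x ∈ Ψ, ∀ i, 0 ≤ x i := by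
      intro x hx i
      have := hΨC hx; rw [hC] at this; exact this.2 i
    have hy : ∀ i : E, ∃ x, x ∈ Ψ ∧ (i ∉ F → 0 < x i) := by
      intro i
      by_cases hi : i ∈ F
      · exact ⟨x0, hx0, fun h => absurd hi h⟩
      · simp only [hF, Set.mem_setOf_eq, not_forall] at hi
        obtain ⟨x, hx, hxi⟩ := hi
        exact ⟨x, hx, fun _ => lt_of_le_of_ne (hΨnn x hx i) (Ne.symm hxi)⟩
    choose y hyΨ hyp using hy
    set w : E → ℝ := ∑ i, y i with hw
    have hwmem : ∀ x ∈ Ψ, x ∈ V ∧ (∀ i, 0 ≤ x i) ∧ ∑ i, α i * x i = 0 := by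
      intro x hx
      have h1 := hΨC hx; rw [hC] at h1
      have h2 : x ∈ {x ∈ C | ∑ i, α i * x i = 0} := by rw [← hΨ]; exact hx
      exact ⟨h1.1, h1.2, h2.2⟩
    have hwV : w ∈ V := Submodule.sum_mem V fun i _ => (hwmem (y i) (hyΨ i)).1
    have hwapp : ∀ j, w j = ∑ i, y i j := fun j => by
      rw [hw]; exact Finset.sum_apply j _ _
    have hwnn : ∀ j, 0 ≤ w j := fun j => by
      rw [hwapp]; exact Finset.sum_nonneg fun i _ => (hwmem (y i) (hyΨ i)).2.1 j
    have hw0 : ∀ j ∈ F, w j = 0 := by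
      intro j hj
      rw [hwapp]
      exact Finset.sum_eq_zero fun i _ => hj (y i) (hyΨ i)
    have hwp : ∀ j ∉ F, 0 < w j := by
      intro j hj
      rw [hwapp]
      exact Finset.sum_pos' (fun i _ => (hwmem (y i) (hyΨ i)).2.1 j)
        ⟨j, Finset.mem_univ j, hyp j hj⟩
    have hwsum : ∑ i, α i * w i = 0 := by
      have : ∑ j, α j * w j = ∑ i, ∑ j, α j * y i j := by
        rw [Finset.sum_comm]
        exact Finset.sum_congr rfl fun j _ => by rw [hwapp, Finset.mul_sum]
      rw [this]
      exact Finset.sum_eq_zero fun i _ => (hwmem (y i) (hyΨ i)).2.2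
    refine ⟨F, ⟨w, hwV, hw0, hwp⟩, ?_⟩
    ext x
    rw [mem_Phi, hΨ]
    constructor
    · rintro ⟨hxC, hx0'⟩
      refine ⟨hxC, ?_⟩
      have hxnn : ∀ i, 0 ≤ x i := by rw [hC] at hxC; exact hxC.2
      have hxV : x ∈ V := by rw [hC] at hxC; exact hxC.1
      -- find ε > 0 with ε * x i ≤ w i for all i
      obtain ⟨ε, hε, hεle⟩ : ∃ ε > (0:ℝ), ∀ i, ε * x i ≤ w i := by
        by_cases hne : (Finset.univ.filter (fun i => i ∉ F)).Nonempty
        · set s := Finset.univ.filter (fun i => i ∉ F)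
          refine ⟨s.inf' hne (fun i => w i / (x i + 1)), ?_, ?_⟩
          · rw [gt_iff_lt, Finset.lt_inf'_iff]
            intro i hi
            have hi' : i ∉ F := (Finset.mem_filter.mp hi).2
            exact div_pos (hwp i hi') (by linarith [hxnn i])
          · intro i
            by_cases hiF : i ∈ F
            · rw [hx0' i hiF, mul_zero]; exact hwnn i
            · have hi : i ∈ s := Finset.mem_filter.mpr ⟨Finset.mem_univ i, hiF⟩
              have h1 : s.inf' hne (fun i => w i / (x i + 1)) ≤ w i / (x i + 1) :=
                Finset.inf'_le _ hi
              have hx1 : (0:ℝ) < x i + 1 := by linarith [hxnn i]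
              have hεnn : (0:ℝ) < s.inf' hne (fun i => w i / (x i + 1)) := by
                rw [Finset.lt_inf'_iff]
                intro j hj
                exact div_pos (hwp j (Finset.mem_filter.mp hj).2) (by linarith [hxnn j])
              calc s.inf' hne (fun i => w i / (x i + 1)) * x i
                  ≤ s.inf' hne (fun i => w i / (x i + 1)) * (x i + 1) := by nlinarith
                _ ≤ (w i / (x i + 1)) * (x i + 1) := by
                    exact mul_le_mul_of_nonneg_right h1 hx1.le
                _ = w i := by field_simp
        · refine ⟨1, one_pos, fun i => ?_⟩
          have hiF : i ∈ F := by
            by_contra h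
            exact hne ⟨i, Finset.mem_filter.mpr ⟨Finset.mem_univ i, h⟩⟩
          rw [hx0' i hiF, mul_zero]
          exact hwnn i
      -- z = w - ε • x ∈ C
      set z : E → ℝ := w - ε • x with hz
      have hzV : z ∈ V := Submodule.sub_mem V hwV (Submodule.smul_mem V ε hxV)
      have hzC : z ∈ C := by
        rw [hC]
        refine ⟨hzV, fun i => ?_⟩
        simp only [hz, Pi.sub_apply, Pi.smul_apply, smul_eq_mul]
        linarith [hεle i]
      have h1 : 0 ≤ ∑ i, α i * z i := hα z hzC
      have h2 : ∑ i, α i * z i = ∑ i, α i * w i - ε * ∑ i, α i * x i := by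
        rw [Finset.mul_sum, ← Finset.sum_sub_distrib]
        refine Finset.sum_congr rfl fun i _ => ?_
        simp only [hz, Pi.sub_apply, Pi.smul_apply, smul_eq_mul]
        ring
      have h3 : 0 ≤ ∑ i, α i * x i := hα x hxC
      rw [h2, hwsum] at h1
      nlinarith
    · rintro ⟨hxC, hxsum⟩
      refine ⟨hxC, fun i hi => hi x ?_⟩
      rw [hΨ]; exact ⟨hxC, hxsum⟩
end

section
/- Let V ⊆ ℝ^E be a linear subspace and F ⊆ G ⊆ E acyclic flats of V. Then the set V_{FG} := π_G(V) ∩ (0^F × ℝ_{>0}^{G\F}) ⊆ ℝ^G is a nonempty relatively open convex cone of dimension rank(G) − rank(F), hence homeomorphic to ℝ^{rank(G) − rank(F)} when rank(G) > rank(F) (and a point when they're equal). -/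
open Module Set

/-- The gauge homeomorphism: a nonempty open convex subset of a real normed
space is homeomorphic to the whole space. -/
lemma nonempty_homeomorph_of_isOpen_convex {W : Type*} [NormedAddCommGroup W]
    [NormedSpace ℝ W] {s : Set W} (ho : IsOpen s) (hc : Convex ℝ s)
    (hne : s.Nonempty) : Nonempty (s ≃ₜ W) := by
  obtain ⟨x₀, hx₀⟩ := hne
  -- translate so that `0 ∈ s`
  let h : W ≃ₜ W := Homeomorph.addRight (-x₀)
  set t : Set W := h '' s with ht
  have htpre : t = (fun z : W => z + x₀) ⁻¹' s := by
    rw [ht]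
    ext z
    constructor
    · rintro ⟨w, hw, rfl⟩
      simpa [h] using hw
    · intro hz
      exact ⟨z + x₀, hz, by simp [h]⟩
  have hto : IsOpen t := h.isOpen_image.2 ho
  have htc : Convex ℝ t := by
    rw [htpre]
    exact hc.affine_preimage ((AffineMap.id ℝ W) + AffineMap.const ℝ W x₀)
  have ht0 : (0 : W) ∈ t := ⟨x₀, hx₀, by simp [h]⟩
  have hmem : ∀ y : W, gauge t y < 1 → y ∈ t := by
    intro y hy
    rw [← gauge_lt_one_eq_self_of_isOpen htc ht0 hto]
    exact hy
  have hlt : ∀ y ∈ t, gauge t y < 1 := fun y hy => gauge_lt_one_of_mem_of_isOpen hto hy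
  have hcontg : Continuous (gauge t) := continuous_gauge htc (hto.mem_nhds ht0)
  have hsmul : ∀ (r : ℝ), 0 ≤ r → ∀ y : W, gauge t (r • y) = r * gauge t y := by
    intro r hr y
    rw [gauge_smul_of_nonneg hr]
    rfl
  -- the gauge homeomorphism `t ≃ₜ W`
  have e : t ≃ₜ W := by
    refine Homeomorph.mk (Equiv.mk
      (fun x => (1 - gauge t x.1)⁻¹ • x.1)
      (fun y => ⟨(1 + gauge t y)⁻¹ • y, ?_⟩) ?_ ?_) ?_ ?_
    · -- invFun lands in t
      apply hmem
      have hb : 0 ≤ gauge t y := gauge_nonneg y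
      have hr : (0:ℝ) ≤ (1 + gauge t y)⁻¹ := inv_nonneg.2 (by linarith)
      rw [hsmul _ hr]
      rw [inv_mul_lt_one₀ (by linarith)]
      linarith
    · -- left inverse
      rintro ⟨x, hx⟩
      have ha0 : 0 ≤ gauge t x := gauge_nonneg x
      have ha1 : gauge t x < 1 := hlt x hx
      apply Subtype.ext
      simp only
      have hr : (0:ℝ) ≤ (1 - gauge t x)⁻¹ := inv_nonneg.2 (by linarith)
      rw [hsmul _ hr, smul_smul]
      have : (1 + (1 - gauge t x)⁻¹ * gauge t x)⁻¹ * (1 - gauge t x)⁻¹ = 1 := by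
        have h1 : 1 - gauge t x ≠ 0 := by intro hz; rw [sub_eq_zero] at hz; linarith
        field_simp
        ring
      rw [this, one_smul]
    · -- right inverse
      intro y
      have hb0 : 0 ≤ gauge t y := gauge_nonneg y
      simp only
      have hr : (0:ℝ) ≤ (1 + gauge t y)⁻¹ := inv_nonneg.2 (by linarith)
      rw [hsmul _ hr, smul_smul]
      have : (1 - (1 + gauge t y)⁻¹ * gauge t y)⁻¹ * (1 + gauge t y)⁻¹ = 1 := by
        have h1 : (1 : ℝ) + gauge t y ≠ 0 := by positivity
        rw [show 1 - (1 + gauge t y)⁻¹ * gauge t y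
            = (1 + gauge t y)⁻¹ * ((1 + gauge t y) - gauge t y) by field_simp]
        field_simp
        ring
      rw [this, one_smul]
    · -- continuity of toFun
      refine Continuous.smul ?_ continuous_subtype_val
      refine Continuous.inv₀ (continuous_const.sub (hcontg.comp continuous_subtype_val)) ?_
      rintro ⟨x, hx⟩
      have := hlt x hx
      simp only [Function.comp]
      intro hzero
      rw [sub_eq_zero] at hzero
      exact absurd hzero.symm (ne_of_lt this)
    · -- continuity of invFun
      refine Continuous.subtype_mk ?_ _
      refine Continuous.smul (Continuous.inv₀ (continuous_const.add hcontg) ?_) continuous_id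
      intro y
      have := gauge_nonneg (s := t) y
      intro hz
      linarith [hz]
  exact ⟨(h.image s).trans e⟩

set_option maxHeartbeats 1600000 in
set_option synthInstance.maxHeartbeats 400000 in
/-- for acyclic flats `F ⊆ G`, the stratum
`π_G(V) ∩ (0^F × ℝ_{>0}^{G∖F})` is a nonempty convex cone homeomorphic to
`ℝ^{rk G - rk F}`. -/
theorem stratum_cell {E : Type*} [Fintype E] (V : Submodule ℝ (E → ℝ))
    (F G : Set E) (hFG : F ⊆ G)
    (hF : IsAcyclicFlat (V : Set (E → ℝ)) F) (hG : IsAcyclicFlat (V : Set (E → ℝ)) G)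
    (rk : Set E → ℕ)
    (hrk : ∀ S : Set E, rk S = Module.finrank ℝ V -
      Module.finrank ℝ
        (V ⊓ ⨅ i ∈ S, LinearMap.ker (LinearMap.proj i : (E → ℝ) →ₗ[ℝ] ℝ) :
          Submodule ℝ (E → ℝ)))
    (S : Set (G → ℝ))
    (hS : S = {y : G → ℝ | (∃ v ∈ V, ∀ i : G, v i = y i) ∧
      (∀ i : G, (i : E) ∈ F → y i = 0) ∧ ∀ i : G, (i : E) ∉ F → 0 < y i}) :
    S.Nonempty ∧ Convex ℝ S ∧ (∀ y ∈ S, ∀ c : ℝ, 0 < c → c • y ∈ S) ∧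
      Nonempty (S ≃ₜ (Fin (rk G - rk F) → ℝ)) := by
  classical
  subst hS
  obtain ⟨wF, hwF, hwF0, hwFpos⟩ := hF
  -- Nonemptiness
  have hSne : {y : G → ℝ | (∃ v ∈ V, ∀ i : G, v i = y i) ∧
      (∀ i : G, (i : E) ∈ F → y i = 0) ∧ ∀ i : G, (i : E) ∉ F → 0 < y i}.Nonempty :=
    ⟨fun i => wF i, ⟨wF, hwF, fun _ => rfl⟩, fun i hi => hwF0 i hi,
      fun i hi => hwFpos i hi⟩
  -- Convexity
  have hconv : Convex ℝ {y : G → ℝ | (∃ v ∈ V, ∀ i : G, v i = y i) ∧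
      (∀ i : G, (i : E) ∈ F → y i = 0) ∧ ∀ i : G, (i : E) ∉ F → 0 < y i} := by
    rintro y₁ ⟨⟨v₁, hv₁, hvy₁⟩, hz₁, hp₁⟩ y₂ ⟨⟨v₂, hv₂, hvy₂⟩, hz₂, hp₂⟩ a b ha hb hab
    refine ⟨⟨a • v₁ + b • v₂, V.add_mem (V.smul_mem a hv₁) (V.smul_mem b hv₂),
      fun i => by simp [hvy₁ i, hvy₂ i]⟩, fun i hi => by
        simp [hz₁ i hi, hz₂ i hi], fun i hi => ?_⟩
    rcases ha.lt_or_eq with ha' | ha'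
    · exact add_pos_of_pos_of_nonneg (mul_pos ha' (hp₁ i hi))
        (mul_nonneg hb (hp₂ i hi).le)
    · have hb1 : b = 1 := by linarith
      simpa [← ha', hb1] using hp₂ i hi
  refine ⟨hSne, hconv, ?_, ?_⟩
  · -- cone property
    rintro y ⟨⟨v, hv, hvy⟩, hz, hp⟩ c hc
    exact ⟨⟨c • v, V.smul_mem c hv, fun i => by simp [hvy i]⟩,
      fun i hi => by simp [Pi.smul_apply, hz i hi],
      fun i hi => by simpa [Pi.smul_apply] using mul_pos hc (hp i hi)⟩
  -- the homeomorphism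
  haveI : Fintype G := Fintype.ofFinite _
  set KF : Submodule ℝ (E → ℝ) :=
    ⨅ i ∈ F, LinearMap.ker (LinearMap.proj i : (E → ℝ) →ₗ[ℝ] ℝ) with hKF
  set KG : Submodule ℝ (E → ℝ) :=
    ⨅ i ∈ G, LinearMap.ker (LinearMap.proj i : (E → ℝ) →ₗ[ℝ] ℝ) with hKG
  have hKFmem : ∀ v : E → ℝ, v ∈ KF ↔ ∀ i ∈ F, v i = 0 := by
    intro v; simp [hKF, Submodule.mem_iInf]
  have hKGmem : ∀ v : E → ℝ, v ∈ KG ↔ ∀ i ∈ G, v i = 0 := by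
    intro v; simp [hKG, Submodule.mem_iInf]
  set p : (E → ℝ) →ₗ[ℝ] (G → ℝ) := LinearMap.funLeft ℝ ℝ (fun i : G => (i : E)) with hpdef
  set U : Submodule ℝ (E → ℝ) := V ⊓ KF with hU
  set W : Submodule ℝ (G → ℝ) := U.map p with hW
  set S : Set (G → ℝ) := {y : G → ℝ | (∃ v ∈ V, ∀ i : G, v i = y i) ∧
      (∀ i : G, (i : E) ∈ F → y i = 0) ∧ ∀ i : G, (i : E) ∉ F → 0 < y i} with hSdef
  have hSW : S ⊆ (W : Set (G → ℝ)) := by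
    rintro y ⟨⟨v, hv, hvy⟩, hz, hp'⟩
    refine ⟨v, ⟨hv, (hKFmem v).2 fun i hi => ?_⟩, funext fun i => hvy i⟩
    rw [show v i = y ⟨i, hFG hi⟩ from hvy ⟨i, hFG hi⟩]
    exact hz ⟨i, hFG hi⟩ hi
  have hWS : ∀ y : G → ℝ, y ∈ W → (∀ i : G, (i : E) ∉ F → 0 < y i) → y ∈ S := by
    rintro y ⟨v, ⟨hvV, hvF⟩, rfl⟩ hpos
    exact ⟨⟨v, hvV, fun i => rfl⟩, fun i hi => (hKFmem v).1 hvF i hi, hpos⟩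
  set S' : Set ↥W := Subtype.val ⁻¹' S with hS'
  have hS'eq : S' = {y : ↥W | ∀ i : G, (i : E) ∉ F → 0 < (y : G → ℝ) i} := by
    ext y
    exact ⟨fun hy => hy.2.2, fun hy => hWS y.1 y.2 hy⟩
  have hS'o : IsOpen S' := by
    rw [hS'eq]
    have : {y : ↥W | ∀ i : G, (i : E) ∉ F → 0 < (y : G → ℝ) i} =
        ⋂ i ∈ {i : G | (i : E) ∉ F}, {y : ↥W | 0 < (y : G → ℝ) i} := by
      ext y; simp
    rw [this]
    exact Set.Finite.isOpen_biInter (Set.toFinite _) fun i _ =>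
      isOpen_lt continuous_const ((continuous_apply (i : G)).comp continuous_subtype_val)
  have hS'c : Convex ℝ S' := hconv.linear_preimage W.subtype
  obtain ⟨y₀, hy₀⟩ := hSne
  have hS'ne : S'.Nonempty := ⟨⟨y₀, hSW hy₀⟩, hy₀⟩
  obtain ⟨φ⟩ := nonempty_homeomorph_of_isOpen_convex hS'o hS'c hS'ne
  -- homeomorphism between the two presentations of the stratum
  let ψ : ↥S ≃ₜ ↥S' :=
    { toFun := fun x => ⟨⟨x.1, hSW x.2⟩, x.2⟩
      invFun := fun y => ⟨y.1.1, y.2⟩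
      left_inv := fun x => rfl
      right_inv := fun y => rfl
      continuous_toFun := ((continuous_subtype_val.subtype_mk _).subtype_mk _)
      continuous_invFun := (continuous_subtype_val.comp continuous_subtype_val).subtype_mk _ }
  -- dimension count
  have hkerp : LinearMap.ker p = KG := by
    ext v
    simp [hpdef, hKGmem, LinearMap.funLeft, funext_iff, Subtype.forall]
  have hle : V ⊓ KG ≤ U := inf_le_inf_left V (biInf_mono hFG)
  set q : ↥U →ₗ[ℝ] (G → ℝ) := p.domRestrict U with hq
  have hrange : LinearMap.range q = W := LinearMap.range_domRestrict U p
  have hker : LinearMap.ker q = Submodule.comap U.subtype (V ⊓ KG) := by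
    rw [hq, LinearMap.ker_domRestrict, hkerp]
    ext x
    simp only [Submodule.mem_comap, Submodule.mem_inf]
    exact ⟨fun hx => ⟨x.2.1, hx⟩, fun hx => hx.2⟩
  have e2 : finrank ℝ (LinearMap.ker q) = finrank ℝ ↥(V ⊓ KG) := by
    rw [hker]
    exact (Submodule.comapSubtypeEquivOfLe hle).finrank_eq
  have hrn := LinearMap.finrank_range_add_finrank_ker q
  rw [hrange, e2] at hrn
  have hle1 : finrank ℝ ↥(V ⊓ KG) ≤ finrank ℝ ↥U := Submodule.finrank_mono hle
  have hle2 : finrank ℝ ↥U ≤ finrank ℝ ↥V := Submodule.finrank_mono inf_le_left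
  have hle3 : finrank ℝ ↥(V ⊓ KG) ≤ finrank ℝ ↥V := Submodule.finrank_mono inf_le_left
  have hd : rk G - rk F = finrank ℝ ↥W := by
    rw [hrk G, hrk F, ← hKF, ← hKG, ← hU]
    omega
  rw [hd]
  let e : ↥W ≃L[ℝ] (Fin (finrank ℝ ↥W) → ℝ) :=
    ContinuousLinearEquiv.ofFinrankEq (by simp [Module.finrank_fin_fun])
  exact ⟨ψ.trans (φ.trans e.toHomeomorph)⟩
end
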